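/- Suppose all products of A_{-1}, A_0, A_1 are entrywise finite. Define R = Σ_{n≥1} Σ_{i_{(n)} ∈ I_{U,1,n}} A_{i_1}⋯A_{i_n} and N = Σ_{n≥0} Σ_{i_{(n)} ∈ I_n} A_{i_1}⋯A_{i_n} (with the n = 0 term equal to the identity). Then R = A_1 N and G = N A_{-1}, where G = Σ_{n≥1} Σ_{i_{(n)} ∈ I_{D,1,n}} A_{i_1}⋯A_{i_n}, all equalities holding in [0,∞]. -/

import Mathlib

open scoped ENNReal
open Classical

abbrev Mx := ℕ → ℕ → ℝ≥0∞

noncomputable def mprod (A B : Mx) : Mx := fun i j => ∑' k, A i k * B k j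

def isPM1 (L : List ℤ) : Prop := ∀ x ∈ L, x = -1 ∨ x = 0 ∨ x = 1

/-- `I_{D,m,n}` with `n = L.length`. -/
def ID (m : ℕ) (L : List ℤ) : Prop :=
  isPM1 L ∧ (∀ k, 1 ≤ k → k ≤ L.length - 1 → -(m : ℤ) + 1 ≤ (L.take k).sum) ∧
    L.sum = -(m : ℤ)

/-- `I_n`: partial sums nonnegative and total sum `0`. -/
def IFlat (L : List ℤ) : Prop :=
  isPM1 L ∧ (∀ k, 1 ≤ k → k ≤ L.length - 1 → 0 ≤ (L.take k).sum) ∧ L.sum = 0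

/-- `I_{U,1,n}`: partial sums `≥ 1` and total sum `1`. -/
def IU (L : List ℤ) : Prop :=
  isPM1 L ∧ (∀ k, 1 ≤ k → k ≤ L.length - 1 → 1 ≤ (L.take k).sum) ∧ L.sum = 1

/-- The matrix associated with an index in `{-1,0,1}`. -/
noncomputable def pick (Am1 A0 A1 : Mx) (x : ℤ) : Mx :=
  if x = -1 then Am1 else if x = 0 then A0 else A1

/-- Product `A_{i₁} A_{i₂} ⋯ A_{i_n}` along an index sequence. -/
noncomputable def seqProd (Am1 A0 A1 : Mx) : List ℤ → Mx
  | [] => fun i j => if i = j then 1 else 0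
  | x :: L => mprod (pick Am1 A0 A1 x) (seqProd Am1 A0 A1 L)

/-!
A path in `I_{U,1,n}` is a step `+1` followed by a path in `I_{n-1}`, and a path in
`I_{D,1,n}` is a path in `I_{n-1}` followed by a step `-1`; both decompositions are
bijective. Since all entries lie in `[0,∞]`, the sums defining `R` and `G` can be reindexed
along these bijections and interchanged with the sum in the matrix product.
-/

lemma mprod_assoc (A B C : Mx) : mprod (mprod A B) C = mprod A (mprod B C) := by
  funext i j
  simp only [mprod, ← ENNReal.tsum_mul_right, ← ENNReal.tsum_mul_left, mul_assoc]
  exact ENNReal.tsum_comm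

lemma id_mprod (A : Mx) : mprod (fun i j => if i = j then 1 else 0) A = A := by
  funext i j
  rw [mprod, tsum_eq_single i fun k hk => by simp [Ne.symm hk]]
  simp

lemma mprod_id (A : Mx) : mprod A (fun i j => if i = j then 1 else 0) = A := by
  funext i j
  rw [mprod, tsum_eq_single j fun k hk => by simp [hk]]
  simp

lemma mprod_tsum {ι : Type*} (A : Mx) (F : ι → Mx) :
    mprod A (fun i j => ∑' s, F s i j) = fun i j => ∑' s, mprod A (F s) i j := by
  funext i j
  simp only [mprod, ← ENNReal.tsum_mul_left]
  exact ENNReal.tsum_comm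

lemma tsum_mprod {ι : Type*} (F : ι → Mx) (A : Mx) :
    mprod (fun i j => ∑' s, F s i j) A = fun i j => ∑' s, mprod (F s) A i j := by
  funext i j
  simp only [mprod, ← ENNReal.tsum_mul_right]
  exact ENNReal.tsum_comm

lemma seqProd_singleton (Am1 A0 A1 : Mx) (x : ℤ) :
    seqProd Am1 A0 A1 [x] = pick Am1 A0 A1 x :=
  mprod_id _

lemma seqProd_append (Am1 A0 A1 : Mx) (L₁ L₂ : List ℤ) :
    seqProd Am1 A0 A1 (L₁ ++ L₂) = mprod (seqProd Am1 A0 A1 L₁) (seqProd Am1 A0 A1 L₂) := by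
  induction L₁ with
  | nil => exact (id_mprod _).symm
  | cons x L ih => rw [List.cons_append, seqProd, seqProd, ih, mprod_assoc]

lemma IFlat.take_sum_nonneg {L : List ℤ} (h : IFlat L) (k : ℕ) : 0 ≤ (L.take k).sum := by
  obtain ⟨-, hpart, htotal⟩ := h
  rcases Nat.eq_zero_or_pos k with rfl | hk
  · simp
  rcases lt_or_ge k L.length with hlt | hge
  · exact hpart k hk (by omega)
  · rw [List.take_of_length_le hge, htotal]

lemma IU_cons_iff {x : ℤ} {L : List ℤ} : IU (x :: L) ↔ x = 1 ∧ IFlat L := by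
  simp only [IU, IFlat, isPM1, List.forall_mem_cons, List.sum_cons, List.length_cons,
    Nat.add_sub_cancel]
  constructor
  · rintro ⟨⟨hx, hL⟩, hpart, htotal⟩
    have hx1 : x = 1 := by
      rcases Nat.eq_zero_or_pos L.length with hnil | hpos
      · simpa [List.length_eq_zero_iff.1 hnil] using htotal
      · have := hpart 1 le_rfl hpos
        simp only [List.take_succ_cons, List.take_zero, List.sum_cons, List.sum_nil] at this
        omega
    subst hx1
    refine ⟨rfl, hL, fun k hk hk' => ?_, by omega⟩
    have := hpart (k + 1) (by omega) (by omega)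
    simp only [List.take_succ_cons, List.sum_cons] at this
    omega
  · rintro ⟨rfl, hflat⟩
    refine ⟨⟨by simp, hflat.1⟩, fun k hk _ => ?_, by simp [hflat.2.2]⟩
    obtain ⟨m, rfl⟩ := Nat.exists_eq_add_of_le' hk
    simpa [List.take_succ_cons] using IFlat.take_sum_nonneg (L := L) hflat m

lemma ID_one_append_singleton_iff {x : ℤ} {L : List ℤ} :
    ID 1 (L ++ [x]) ↔ x = -1 ∧ IFlat L := by
  have htake : ∀ k ≤ L.length, (L ++ [x]).take k = L.take k := fun k hk =>
    List.take_append_of_le_length hk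
  simp only [ID, IFlat, isPM1, List.forall_mem_append, List.forall_mem_singleton, List.sum_append,
    List.sum_singleton, List.length_append, List.length_singleton, Nat.add_sub_cancel,
    Nat.cast_one]
  constructor
  · rintro ⟨⟨hL, hx⟩, hpart, htotal⟩
    have hx1 : x = -1 := by
      rcases Nat.eq_zero_or_pos L.length with hnil | hpos
      · simpa [List.length_eq_zero_iff.1 hnil] using htotal
      · have := hpart L.length hpos le_rfl
        rw [htake _ le_rfl, List.take_length] at this
        omega
    subst hx1
    refine ⟨rfl, hL, fun k hk hk' => ?_, by omega⟩
    have := hpart k hk (by omega)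
    rw [htake k (by omega)] at this
    omega
  · rintro ⟨rfl, hflat⟩
    refine ⟨⟨hflat.1, by simp⟩, fun k _ hk => ?_, by simp [hflat.2.2]⟩
    rw [htake k hk]
    simpa using IFlat.take_sum_nonneg (L := L) hflat k

noncomputable def IFlat.equivIU : {L : List ℤ // IFlat L} ≃ {L : List ℤ // IU L} :=
  Equiv.ofBijective (fun L => ⟨1 :: L.1, IU_cons_iff.2 ⟨rfl, L.2⟩⟩) <| by
    refine ⟨fun L L' h => Subtype.ext (by simpa using h), fun ⟨L, hL⟩ => ?_⟩
    cases L with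
    | nil => simp [IU] at hL
    | cons x L =>
      obtain ⟨rfl, hflat⟩ := IU_cons_iff.1 hL
      exact ⟨⟨L, hflat⟩, rfl⟩

noncomputable def IFlat.equivID : {L : List ℤ // IFlat L} ≃ {L : List ℤ // ID 1 L} :=
  Equiv.ofBijective (fun L => ⟨L.1 ++ [-1], ID_one_append_singleton_iff.2 ⟨rfl, L.2⟩⟩) <| by
    refine ⟨fun L L' h => Subtype.ext (by simpa using h), fun ⟨L, hL⟩ => ?_⟩
    rcases L.eq_nil_or_concat' with rfl | ⟨L, x, rfl⟩
    · simp [ID] at hL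
    · obtain ⟨rfl, hflat⟩ := ID_one_append_singleton_iff.1 hL
      exact ⟨⟨L, hflat⟩, rfl⟩

lemma tsum_IU_eq {α : Type*} [AddCommMonoid α] [TopologicalSpace α] (f : List ℤ → α) :
    ∑' L : {L : List ℤ // IU L}, f L.1 = ∑' L : {L : List ℤ // IFlat L}, f (1 :: L.1) :=
  (IFlat.equivIU.tsum_eq fun L => f L.1).symm

lemma tsum_ID_one_eq {α : Type*} [AddCommMonoid α] [TopologicalSpace α] (f : List ℤ → α) :
    ∑' L : {L : List ℤ // ID 1 L}, f L.1 = ∑' L : {L : List ℤ // IFlat L}, f (L.1 ++ [-1]) :=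
  (IFlat.equivID.tsum_eq fun L => f L.1).symm

theorem stmt6_general (Am1 A0 A1 : Mx)
    (N R G : Mx)
    (hN : N = fun i j => ∑' L : {L : List ℤ // IFlat L}, seqProd Am1 A0 A1 L.1 i j)
    (hR : R = fun i j => ∑' L : {L : List ℤ // IU L}, seqProd Am1 A0 A1 L.1 i j)
    (hG : G = fun i j => ∑' L : {L : List ℤ // ID 1 L}, seqProd Am1 A0 A1 L.1 i j) :
    R = mprod A1 N ∧ G = mprod N Am1 := by
  subst hN hR hG
  rw [mprod_tsum, tsum_mprod]
  constructor <;> funext i j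
  · refine (tsum_IU_eq fun L => seqProd Am1 A0 A1 L i j).trans (tsum_congr fun L => ?_)
    simp [seqProd, pick]
  · refine (tsum_ID_one_eq fun L => seqProd Am1 A0 A1 L i j).trans (tsum_congr fun L => ?_)
    simp [seqProd_append, seqProd_singleton, pick]

/-- With `N = Σ_{n≥0} Σ_{i_{(n)} ∈ I_n} A_{i₁}⋯A_{i_n}` (the `n = 0` term being the
identity), `R = Σ_{n≥1} Σ_{i_{(n)} ∈ I_{U,1,n}} A_{i₁}⋯A_{i_n}` and
`G = Σ_{n≥1} Σ_{i_{(n)} ∈ I_{D,1,n}} A_{i₁}⋯A_{i_n}`, one has `R = A₁ N` and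
`G = N A₋₁` in `[0,∞]`. -/
theorem stmt6 (Am1 A0 A1 : Mx)
    (hfin : ∀ L : List ℤ, isPM1 L → ∀ i j, seqProd Am1 A0 A1 L i j ≠ ⊤)
    (N R G : Mx)
    (hN : N = fun i j => ∑' L : {L : List ℤ // IFlat L}, seqProd Am1 A0 A1 L.1 i j)
    (hR : R = fun i j => ∑' L : {L : List ℤ // IU L}, seqProd Am1 A0 A1 L.1 i j)
    (hG : G = fun i j => ∑' L : {L : List ℤ // ID 1 L}, seqProd Am1 A0 A1 L.1 i j) :
    R = mprod A1 N ∧ G = mprod N Am1 :=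
  stmt6_general Am1 A0 A1 N R G hN hR hG
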